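/- arXiv:1807.09148 — 2 statements merged into one kernel-verified Lean document; each statement's English description precedes it below -/
import Mathlib

section
/- For the doubly robust estimating function D(O) = (A/g(W))(Y − m₁(W)) + m₁(W) − θ with g(w) = P(A=1 | W=w) the true propensity score and θ = E[E[Y | A=1, W]]: E[D(O)] = 0 for any bounded measurable function m₁. -/
open MeasureTheory ProbabilityTheory

/-- Double robustness, correct propensity score: with `g(W) = E[A | W]` bounded
below by `ε > 0`, `m(w) = E[Y | A=1, W=w]` and `θ = E[m(W)]`, for any bounded
measurable `m₁`, `E[(A/g(W))(Y − m₁(W)) + m₁(W) − θ] = 0`. -/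
theorem estimating_eq_correct_propensity {Ω β : Type*}
    [m0 : MeasurableSpace Ω] [mβ : MeasurableSpace β]
    (μ : Measure Ω) [IsProbabilityMeasure μ]
    (W : Ω → β) (A Y : Ω → ℝ)
    (hW : Measurable W) (hA : Measurable A) (hY : Measurable Y)
    (hA01 : ∀ ω, A ω = 0 ∨ A ω = 1) (hY01 : ∀ ω, Y ω ∈ Set.Icc (0:ℝ) 1)
    (g m : β → ℝ) (hg : Measurable g) (hm : Measurable m)
    (hmbd : ∀ w, m w ∈ Set.Icc (0:ℝ) 1)
    (ε : ℝ) (hε : 0 < ε) (hgbd : ∀ w, g w ∈ Set.Icc ε 1)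
    (hgver : (fun ω => g (W ω)) =ᵐ[μ] μ[A | MeasurableSpace.comap W mβ])
    (hmver : (fun ω => m (W ω) * g (W ω))
      =ᵐ[μ] μ[fun ω => A ω * Y ω | MeasurableSpace.comap W mβ])
    (m₁ : β → ℝ) (hm₁ : Measurable m₁) (C : ℝ) (hm₁bd : ∀ w, |m₁ w| ≤ C)
    (θ : ℝ) (hθ : θ = ∫ ω, m (W ω) ∂μ) :
    ∫ ω, (A ω / g (W ω) * (Y ω - m₁ (W ω)) + m₁ (W ω) - θ) ∂μ = 0 := by
  set mW := MeasurableSpace.comap W mβ with hmWdef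
  have hmle : mW ≤ m0 := hW.comap_le
  have hWm : Measurable[mW] W := fun s hs => ⟨s, hs, rfl⟩
  have intbd : ∀ (f : Ω → ℝ), Measurable[m0] f → ∀ c : ℝ, (∀ ω, |f ω| ≤ c) →
      Integrable f μ := fun f hf c hc =>
    (memLp_top_of_bound (μ := μ) (hf.aestronglyMeasurable (μ := μ)) c
      (ae_of_all μ fun ω => (Real.norm_eq_abs _).le.trans (hc ω))).integrable le_top
  have hgpos : ∀ w, 0 < g w := fun w => lt_of_lt_of_le hε (hgbd w).1
  have hgne : ∀ w, g w ≠ 0 := fun w => ne_of_gt (hgpos w)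
  -- pull-out key lemma
  have key : ∀ (h : β → ℝ), Measurable h → ∀ c : ℝ, (∀ w, |h w| ≤ c) →
      ∀ X : Ω → ℝ, Integrable X μ →
      ∫ ω, h (W ω) * X ω ∂μ = ∫ ω, h (W ω) * (μ[X|mW]) ω ∂μ := by
    intro h hh c hc X hX
    have hsm : StronglyMeasurable[mW] (fun ω => h (W ω)) :=
      (hh.comp hWm).stronglyMeasurable
    have hae := condExp_stronglyMeasurable_mul_of_bound hmle hsm hX c
      (ae_of_all _ fun ω => (Real.norm_eq_abs _).le.trans (hc (W ω)))
    calc ∫ ω, h (W ω) * X ω ∂μ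
        = ∫ ω, (μ[(fun ω => h (W ω)) * X|mW]) ω ∂μ := (integral_condExp hmle).symm
      _ = ∫ ω, h (W ω) * (μ[X|mW]) ω ∂μ := integral_congr_ae hae
  -- integrability facts
  have hAbd : ∀ ω, |A ω| ≤ 1 := fun ω => by rcases hA01 ω with h | h <;> simp [h]
  have hAint : Integrable A μ := intbd A hA 1 hAbd
  have hAYbd : ∀ ω, |A ω * Y ω| ≤ 1 := fun ω => by
    rcases hA01 ω with h | h
    · simp [h]
    · rcases hY01 ω with ⟨h0, h1⟩
      rw [h, one_mul, abs_of_nonneg h0]; exact h1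
  have hAYint : Integrable (fun ω => A ω * Y ω) μ := intbd _ (hA.mul hY) 1 hAYbd
  -- first identity : ∫ (1/g)(W) * (A Y) = θ
  have h1 : ∫ ω, (1 / g (W ω)) * (A ω * Y ω) ∂μ = θ := by
    have hmeas : Measurable (fun w => 1 / g w) := measurable_const.div hg
    have hbd : ∀ w, |1 / g w| ≤ 1 / ε := fun w => by
      rw [abs_of_pos (by have := hgpos w; positivity)]
      exact one_div_le_one_div_of_le hε (hgbd w).1
    rw [key _ hmeas (1 / ε) hbd _ hAYint]
    have : ∫ ω, (1 / g (W ω)) * (μ[fun ω => A ω * Y ω|mW]) ω ∂μ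
        = ∫ ω, m (W ω) ∂μ := by
      refine integral_congr_ae (hmver.symm.mono fun ω hω => ?_)
      show (1 / g (W ω)) * (μ[fun ω => A ω * Y ω|mW]) ω = m (W ω)
      rw [hω]; show (1 / g (W ω)) * (m (W ω) * g (W ω)) = m (W ω)
      field_simp
      simp [hgne]
    rw [this, hθ]
  -- second identity : ∫ (m₁/g)(W) * A = ∫ m₁(W)
  have h2 : ∫ ω, (m₁ (W ω) / g (W ω)) * A ω ∂μ = ∫ ω, m₁ (W ω) ∂μ := by
    have hmeas : Measurable (fun w => m₁ w / g w) := hm₁.div hg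
    have hbd : ∀ w, |m₁ w / g w| ≤ |C| / ε := fun w => by
      rw [abs_div]
      refine div_le_div₀ (abs_nonneg C) ((hm₁bd w).trans (le_abs_self C)) hε ?_
      rw [abs_of_pos (hgpos w)]; exact (hgbd w).1
    rw [key _ hmeas (|C| / ε) hbd _ hAint]
    refine integral_congr_ae (hgver.symm.mono fun ω hω => ?_)
    show (m₁ (W ω) / g (W ω)) * (μ[A|mW]) ω = m₁ (W ω)
    rw [hω]; show (m₁ (W ω) / g (W ω)) * g (W ω) = m₁ (W ω)
    field_simp
    rw [mul_div_assoc, div_self (hgne _), mul_one]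
  -- rewrite integrand
  have hsplit : ∀ ω, A ω / g (W ω) * (Y ω - m₁ (W ω)) + m₁ (W ω) - θ
      = ((1 / g (W ω)) * (A ω * Y ω) - (m₁ (W ω) / g (W ω)) * A ω)
        + (m₁ (W ω) - θ) := fun ω => by ring
  have hi1 : Integrable (fun ω => (1 / g (W ω)) * (A ω * Y ω)) μ :=
    intbd _ ((((measurable_const.div hg : Measurable fun w => 1 / g w)).comp hW).mul
      (hA.mul hY)) (1 / ε)
      (fun ω => by
        rw [abs_mul]
        have h1 : |1 / g (W ω)| ≤ 1 / ε := by
          rw [abs_of_pos (by have := hgpos (W ω); positivity)]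
          exact one_div_le_one_div_of_le hε (hgbd (W ω)).1
        calc |1 / g (W ω)| * |A ω * Y ω| ≤ (1 / ε) * 1 :=
              mul_le_mul h1 (hAYbd ω) (abs_nonneg _) (by positivity)
          _ = 1 / ε := mul_one _)
  have hi2 : Integrable (fun ω => (m₁ (W ω) / g (W ω)) * A ω) μ :=
    intbd _ (((hm₁.div hg).comp hW).mul hA) (|C| / ε)
      (fun ω => by
        rw [abs_mul]
        have h1 : |m₁ (W ω) / g (W ω)| ≤ |C| / ε := by
          rw [abs_div]
          refine div_le_div₀ (abs_nonneg C) ((hm₁bd _).trans (le_abs_self C)) hε ?_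
          rw [abs_of_pos (hgpos _)]; exact (hgbd _).1
        calc |m₁ (W ω) / g (W ω)| * |A ω| ≤ (|C| / ε) * 1 :=
              mul_le_mul h1 (hAbd ω) (abs_nonneg _) (by positivity)
          _ = |C| / ε := mul_one _)
  have hi3 : Integrable (fun ω => m₁ (W ω) - θ) μ :=
    ((intbd (fun ω => m₁ (W ω)) (hm₁.comp hW) C (fun ω => hm₁bd _)).sub (integrable_const θ))
  calc ∫ ω, (A ω / g (W ω) * (Y ω - m₁ (W ω)) + m₁ (W ω) - θ) ∂μ
      = ∫ ω, (((1 / g (W ω)) * (A ω * Y ω) - (m₁ (W ω) / g (W ω)) * A ω)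
          + (m₁ (W ω) - θ)) ∂μ := by
        exact integral_congr_ae (ae_of_all _ hsplit)
    _ = (∫ ω, ((1 / g (W ω)) * (A ω * Y ω) - (m₁ (W ω) / g (W ω)) * A ω) ∂μ)
        + ∫ ω, (m₁ (W ω) - θ) ∂μ := integral_add (hi1.sub hi2) hi3
    _ = ((∫ ω, (1 / g (W ω)) * (A ω * Y ω) ∂μ)
        - ∫ ω, (m₁ (W ω) / g (W ω)) * A ω ∂μ)
        + ((∫ ω, m₁ (W ω) ∂μ) - ∫ _ω, θ ∂μ) := by
        rw [integral_sub hi1 hi2,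
          integral_sub (intbd (fun ω => m₁ (W ω)) (hm₁.comp hW) C (fun ω => hm₁bd _)) (integrable_const θ)]
    _ = 0 := by
        rw [h1, h2, integral_const]
        simp
end

section
/- Efficiency-bound variance decomposition: the variance of D(O) = (A/g(W))(Y − m(W)) + m(W) − θ equals E[σ²(W)/g(W)] + E[(m(W) − θ)²], where σ²(W) = Var(Y | A=1, W), g(W) = E[A|W] ≥ ε > 0, m(W) = E[Y|A=1,W], θ = E[m(W)]. -/
open MeasureTheory ProbabilityTheory

private lemma intBdd {Ω : Type*} [MeasurableSpace Ω] (μ : Measure Ω) [IsFiniteMeasure μ]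
    {f : Ω → ℝ} (hf : Measurable f) (C : ℝ) (h : ∀ ω, |f ω| ≤ C) : Integrable f μ :=
  ⟨hf.aestronglyMeasurable, HasFiniteIntegral.of_bounded (C := C) (Filter.Eventually.of_forall h)⟩

private lemma pull {Ω β : Type*} [m0 : MeasurableSpace Ω] [mβ : MeasurableSpace β]
    (μ : Measure Ω) [IsProbabilityMeasure μ] (W : Ω → β) (hW : Measurable W)
    {h : β → ℝ} (hh : Measurable h) {X : Ω → ℝ} (hX : Integrable X μ)
    (hprod : Integrable (fun ω => h (W ω) * X ω) μ) :
    ∫ ω, h (W ω) * X ω ∂μ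
      = ∫ ω, h (W ω) * (μ[X | MeasurableSpace.comap W mβ]) ω ∂μ := by
  have hle : MeasurableSpace.comap W mβ ≤ m0 := hW.comap_le
  have hWm : @Measurable Ω β (MeasurableSpace.comap W mβ) mβ W := fun s hs => ⟨s, hs, rfl⟩
  have hsm : StronglyMeasurable[MeasurableSpace.comap W mβ] (fun ω => h (W ω)) :=
    (hh.comp hWm).stronglyMeasurable
  have key := condExp_mul_of_stronglyMeasurable_left (μ := μ) hsm hprod hX
  calc ∫ ω, h (W ω) * X ω ∂μ
      = ∫ ω, (μ[(fun ω => h (W ω)) * X | MeasurableSpace.comap W mβ]) ω ∂μ :=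
        (integral_condExp hle).symm
    _ = ∫ ω, h (W ω) * (μ[X | MeasurableSpace.comap W mβ]) ω ∂μ :=
        integral_congr_ae (key.mono fun ω hω => by simpa using hω)

/-- Efficiency-bound variance decomposition: the variance of
`D = (A/g(W))(Y − m(W)) + m(W) − θ` equals
`E[σ²(W)/g(W)] + E[(m(W) − θ)²]`, where `σ²(W) = Var(Y | A=1, W)`
(characterized by `E[A(Y − m(W))² | W] = σ²(W)·g(W)`), `g(W) = E[A|W] ≥ ε > 0`,
`m(W) = E[Y|A=1,W]` and `θ = E[m(W)]`. -/
theorem efficiency_bound_decomposition {Ω β : Type*}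
    [m0 : MeasurableSpace Ω] [mβ : MeasurableSpace β]
    (μ : Measure Ω) [IsProbabilityMeasure μ]
    (W : Ω → β) (A Y : Ω → ℝ)
    (hW : Measurable W) (hA : Measurable A) (hY : Measurable Y)
    (hA01 : ∀ ω, A ω = 0 ∨ A ω = 1) (hY01 : ∀ ω, Y ω ∈ Set.Icc (0:ℝ) 1)
    (g m sigma2 : β → ℝ) (hg : Measurable g) (hm : Measurable m)
    (hsigma2 : Measurable sigma2)
    (hmbd : ∀ w, m w ∈ Set.Icc (0:ℝ) 1) (hs2bd : ∀ w, sigma2 w ∈ Set.Icc (0:ℝ) 1)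
    (ε : ℝ) (hε : 0 < ε) (hgbd : ∀ w, g w ∈ Set.Icc ε 1)
    (hgver : (fun ω => g (W ω)) =ᵐ[μ] μ[A | MeasurableSpace.comap W mβ])
    (hmver : (fun ω => m (W ω) * g (W ω))
      =ᵐ[μ] μ[fun ω => A ω * Y ω | MeasurableSpace.comap W mβ])
    (hs2ver : (fun ω => sigma2 (W ω) * g (W ω))
      =ᵐ[μ] μ[fun ω => A ω * (Y ω - m (W ω)) ^ 2 | MeasurableSpace.comap W mβ])
    (θ : ℝ) (hθ : θ = ∫ ω, m (W ω) ∂μ) :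
    variance (fun ω => A ω / g (W ω) * (Y ω - m (W ω)) + m (W ω) - θ) μ
      = (∫ ω, sigma2 (W ω) / g (W ω) ∂μ) + ∫ ω, (m (W ω) - θ) ^ 2 ∂μ := by
  have hle : MeasurableSpace.comap W mβ ≤ m0 := hW.comap_le
  have hWm : @Measurable Ω β (MeasurableSpace.comap W mβ) mβ W := fun s hs => ⟨s, hs, rfl⟩
  -- pointwise bounds
  have hgε : ∀ ω, ε ≤ g (W ω) := fun ω => (hgbd (W ω)).1
  have hg1 : ∀ ω, g (W ω) ≤ 1 := fun ω => (hgbd (W ω)).2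
  have hgpos : ∀ ω, 0 < g (W ω) := fun ω => lt_of_lt_of_le hε (hgε ω)
  have hgne : ∀ ω, g (W ω) ≠ 0 := fun ω => (hgpos ω).ne'
  have habsA : ∀ ω, |A ω| ≤ 1 := fun ω => by rcases hA01 ω with h | h <;> simp [h]
  have habsYm : ∀ ω, |Y ω - m (W ω)| ≤ 1 := fun ω => by
    have h1 := hY01 ω; have h2 := hmbd (W ω)
    rw [Set.mem_Icc] at h1 h2
    rw [abs_le]; constructor <;> linarith [h1.1, h1.2, h2.1, h2.2]
  have habsm : ∀ ω, |m (W ω)| ≤ 1 := fun ω => by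
    have h2 := hmbd (W ω); rw [Set.mem_Icc] at h2
    rw [abs_le]; constructor <;> linarith [h2.1, h2.2]
  have hθbd : |θ| ≤ 1 := by
    rw [hθ]
    have := norm_integral_le_of_norm_le_const (μ := μ)
      (f := fun ω => m (W ω)) (C := 1) (Filter.Eventually.of_forall fun ω => by
        simpa using habsm ω)
    simpa using this
  have habsinvg : ∀ ω, |1 / g (W ω)| ≤ 1 / ε := fun ω => by
    rw [abs_of_pos (div_pos one_pos (hgpos ω))]
    exact one_div_le_one_div_of_le hε (hgε ω)
  have habsmθg : ∀ ω, |(m (W ω) - θ) / g (W ω)| ≤ 2 / ε := fun ω => by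
    rw [abs_div, abs_of_pos (hgpos ω), div_le_div_iff₀ (hgpos ω) hε]
    have h1 : |m (W ω) - θ| ≤ 2 := by
      calc |m (W ω) - θ| ≤ |m (W ω)| + |θ| := abs_sub _ _
        _ ≤ 2 := by linarith [habsm ω, hθbd]
    nlinarith [abs_nonneg (m (W ω) - θ), hgε ω, hgpos ω]
  -- measurability
  have hmW : Measurable fun ω => m (W ω) := hm.comp hW
  have hgW : Measurable fun ω => g (W ω) := hg.comp hW
  have hs2W : Measurable fun ω => sigma2 (W ω) := hsigma2.comp hW
  have hX2m : Measurable fun ω => A ω * (Y ω - m (W ω)) := hA.mul (hY.sub hmW)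
  have hX1m : Measurable fun ω => A ω * (Y ω - m (W ω)) ^ 2 := hA.mul ((hY.sub hmW).pow_const 2)
  -- integrability
  have hX2int : Integrable (fun ω => A ω * (Y ω - m (W ω))) μ :=
    intBdd μ hX2m 1 fun ω => by
      rw [abs_mul]
      calc |A ω| * |Y ω - m (W ω)| ≤ 1 * 1 :=
        mul_le_mul (habsA ω) (habsYm ω) (abs_nonneg _) zero_le_one
      _ = 1 := one_mul 1
  have hX1int : Integrable (fun ω => A ω * (Y ω - m (W ω)) ^ 2) μ :=
    intBdd μ hX1m 1 fun ω => by
      rw [abs_mul, abs_pow]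
      nlinarith [habsA ω, habsYm ω, abs_nonneg (A ω), abs_nonneg (Y ω - m (W ω))]
  have hAYint : Integrable (fun ω => A ω * Y ω) μ :=
    intBdd μ (hA.mul hY) 1 fun ω => by
      rw [abs_mul]
      have := hY01 ω; rw [Set.mem_Icc] at this
      calc |A ω| * |Y ω| ≤ 1 * 1 :=
        mul_le_mul (habsA ω) (abs_le.2 ⟨by linarith [this.1], this.2⟩) (abs_nonneg _) zero_le_one
      _ = 1 := one_mul 1
  have hmAint : Integrable (fun ω => m (W ω) * A ω) μ :=
    intBdd μ (hmW.mul hA) 1 fun ω => by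
      rw [abs_mul]
      calc |m (W ω)| * |A ω| ≤ 1 * 1 :=
        mul_le_mul (habsm ω) (habsA ω) (abs_nonneg _) zero_le_one
      _ = 1 := one_mul 1
  have hAint : Integrable A μ := intBdd μ hA 1 habsA
  have hinvgX2int : Integrable (fun ω => (1 / g (W ω)) * (A ω * (Y ω - m (W ω)))) μ :=
    intBdd μ ((measurable_const.div hgW).mul hX2m) (1 / ε) fun ω => by
      rw [abs_mul, abs_mul]
      have hp : |A ω| * |Y ω - m (W ω)| ≤ 1 := mul_le_one₀ (habsA ω) (abs_nonneg _) (habsYm ω)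
      calc |1 / g (W ω)| * (|A ω| * |Y ω - m (W ω)|) ≤ (1 / ε) * 1 :=
        mul_le_mul (habsinvg ω) hp (by positivity) (le_of_lt (one_div_pos.mpr hε))
      _ = 1 / ε := mul_one _
  have hmθgX2int : Integrable (fun ω => ((m (W ω) - θ) / g (W ω)) * (A ω * (Y ω - m (W ω)))) μ :=
    intBdd μ (((hmW.sub measurable_const).div hgW).mul hX2m) (2 / ε) fun ω => by
      rw [abs_mul, abs_mul]
      have hp : |A ω| * |Y ω - m (W ω)| ≤ 1 := mul_le_one₀ (habsA ω) (abs_nonneg _) (habsYm ω)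
      calc |(m (W ω) - θ) / g (W ω)| * (|A ω| * |Y ω - m (W ω)|) ≤ (2 / ε) * 1 :=
        mul_le_mul (habsmθg ω) hp (by positivity) (div_nonneg (by norm_num) hε.le)
      _ = 2 / ε := mul_one _
  have hinvg2X1int : Integrable (fun ω => (1 / (g (W ω)) ^ 2) * (A ω * (Y ω - m (W ω)) ^ 2)) μ :=
    intBdd μ ((measurable_const.div (hgW.pow_const 2)).mul hX1m) (1 / ε ^ 2) fun ω => by
      rw [abs_mul]
      have h1 : |1 / g (W ω) ^ 2| ≤ 1 / ε ^ 2 := by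
        rw [abs_of_pos (one_div_pos.mpr (pow_pos (hgpos ω) 2))]
        apply one_div_le_one_div_of_le (pow_pos hε 2)
        exact pow_le_pow_left₀ hε.le (hgε ω) 2
      have h2 : |A ω * (Y ω - m (W ω)) ^ 2| ≤ 1 := by
        rw [abs_mul, abs_pow]
        nlinarith [habsA ω, habsYm ω, abs_nonneg (A ω), abs_nonneg (Y ω - m (W ω))]
      nlinarith [abs_nonneg (1 / g (W ω) ^ 2), abs_nonneg (A ω * (Y ω - m (W ω)) ^ 2),
        one_div_pos.mpr (pow_pos hε 2)]
  have hmWint : Integrable (fun ω => m (W ω)) μ := intBdd μ hmW 1 habsm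
  have hmθint : Integrable (fun ω => m (W ω) - θ) μ := hmWint.sub (integrable_const θ)
  have hmθsqint : Integrable (fun ω => (m (W ω) - θ) ^ 2) μ :=
    intBdd μ ((hmW.sub measurable_const).pow_const 2) 4 fun ω => by
      have hb : |m (W ω) - θ| ≤ 2 :=
        le_trans (abs_sub _ _) (by linarith [habsm ω, hθbd])
      rw [abs_pow]
      nlinarith [abs_nonneg (m (W ω) - θ)]
  -- conditional expectation of A(Y - m(W)) is zero
  have hzero : μ[(fun ω => A ω * (Y ω - m (W ω))) | MeasurableSpace.comap W mβ] =ᵐ[μ] 0 := by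
    have hX2eq : (fun ω => A ω * (Y ω - m (W ω)))
        = (fun ω => A ω * Y ω) - fun ω => m (W ω) * A ω := by
      funext ω; simp [Pi.sub_apply]; ring
    have hsmm : StronglyMeasurable[MeasurableSpace.comap W mβ] (fun ω => m (W ω)) :=
      (hm.comp hWm).stronglyMeasurable
    have h2 : μ[(fun ω => m (W ω) * A ω) | MeasurableSpace.comap W mβ]
        =ᵐ[μ] fun ω => m (W ω) * g (W ω) := by
      have hkey := condExp_mul_of_stronglyMeasurable_left (μ := μ) hsmm hmAint hAint
      refine hkey.trans ?_
      filter_upwards [hgver] with ω hω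
      simp only [Pi.mul_apply, ← hω]
    have h1 : μ[(fun ω => A ω * Y ω) - (fun ω => m (W ω) * A ω) | MeasurableSpace.comap W mβ]
        =ᵐ[μ] μ[(fun ω => A ω * Y ω) | MeasurableSpace.comap W mβ]
          - μ[(fun ω => m (W ω) * A ω) | MeasurableSpace.comap W mβ] :=
      condExp_sub hAYint hmAint (MeasurableSpace.comap W mβ)
    rw [hX2eq]
    refine h1.trans ?_
    filter_upwards [hmver, h2] with ω ha hb
    simp only [Pi.sub_apply, Pi.zero_apply, ← ha, hb]
    ring
  -- zero integrals
  have hz1 : ∫ ω, (1 / g (W ω)) * (A ω * (Y ω - m (W ω))) ∂μ = 0 := by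
    rw [pull μ W hW (h := fun w => 1 / g w) (measurable_const.div hg) hX2int hinvgX2int]
    have heq : (fun ω => (1 / g (W ω))
        * (μ[(fun ω => A ω * (Y ω - m (W ω))) | MeasurableSpace.comap W mβ]) ω) =ᵐ[μ] 0 := by
      filter_upwards [hzero] with ω hω
      simp [hω]
    rw [integral_congr_ae heq]
    simp
  have hz2 : ∫ ω, ((m (W ω) - θ) / g (W ω)) * (A ω * (Y ω - m (W ω))) ∂μ = 0 := by
    rw [pull μ W hW (h := fun w => (m w - θ) / g w) ((hm.sub measurable_const).div hg) hX2int hmθgX2int]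
    have heq : (fun ω => ((m (W ω) - θ) / g (W ω))
        * (μ[(fun ω => A ω * (Y ω - m (W ω))) | MeasurableSpace.comap W mβ]) ω) =ᵐ[μ] 0 := by
      filter_upwards [hzero] with ω hω
      simp [hω]
    rw [integral_congr_ae heq]
    simp
  -- the quadratic term
  have hq : ∫ ω, (1 / (g (W ω)) ^ 2) * (A ω * (Y ω - m (W ω)) ^ 2) ∂μ
      = ∫ ω, sigma2 (W ω) / g (W ω) ∂μ := by
    rw [pull μ W hW (h := fun w => 1 / g w ^ 2) (measurable_const.div (hg.pow_const 2)) hX1int hinvg2X1int]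
    refine integral_congr_ae ?_
    filter_upwards [hs2ver] with ω hω
    have hne := hgne ω
    rw [← hω]
    field_simp
  -- mean is zero
  have hDeq : (fun ω => A ω / g (W ω) * (Y ω - m (W ω)) + m (W ω) - θ)
      = fun ω => (1 / g (W ω)) * (A ω * (Y ω - m (W ω))) + (m (W ω) - θ) := by
    funext ω; ring
  have hmean : ∫ ω, (A ω / g (W ω) * (Y ω - m (W ω)) + m (W ω) - θ) ∂μ = 0 := by
    rw [hDeq, integral_add hinvgX2int hmθint, hz1,
      integral_sub hmWint (integrable_const θ), integral_const]
    simp [← hθ]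
  -- pointwise expansion of the square
  have hDsq : ∀ ω, (A ω / g (W ω) * (Y ω - m (W ω)) + m (W ω) - θ) ^ 2
      = (1 / (g (W ω)) ^ 2) * (A ω * (Y ω - m (W ω)) ^ 2)
        + (2 * (((m (W ω) - θ) / g (W ω)) * (A ω * (Y ω - m (W ω))))
        + (m (W ω) - θ) ^ 2) := by
    intro ω
    have hne := hgne ω
    rcases hA01 ω with h | h <;> rw [h] <;> field_simp <;> ring
  have hsq : ∫ ω, (A ω / g (W ω) * (Y ω - m (W ω)) + m (W ω) - θ) ^ 2 ∂μ
      = (∫ ω, sigma2 (W ω) / g (W ω) ∂μ) + ∫ ω, (m (W ω) - θ) ^ 2 ∂μ := by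
    have hi2 : Integrable
        (fun ω => 2 * (((m (W ω) - θ) / g (W ω)) * (A ω * (Y ω - m (W ω))))) μ :=
      hmθgX2int.const_mul 2
    have hi23 : Integrable (fun ω =>
        2 * (((m (W ω) - θ) / g (W ω)) * (A ω * (Y ω - m (W ω)))) + (m (W ω) - θ) ^ 2) μ :=
      hi2.add hmθsqint
    rw [integral_congr_ae (Filter.Eventually.of_forall hDsq),
      integral_add hinvg2X1int hi23, integral_add hi2 hmθsqint, hq,
      integral_const_mul, hz2]
    ring
  -- conclude
  have hmemlp : MemLp (fun ω => A ω / g (W ω) * (Y ω - m (W ω)) + m (W ω) - θ) 2 μ := by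
    refine MemLp.of_bound ?_ (1 / ε + 2) (Filter.Eventually.of_forall fun ω => ?_)
    · exact (((hA.div hgW).mul (hY.sub hmW)).add hmW |>.sub measurable_const).aestronglyMeasurable
    · rw [Real.norm_eq_abs]
      have h1 : |A ω / g (W ω) * (Y ω - m (W ω))| ≤ 1 / ε := by
        have he : A ω / g (W ω) * (Y ω - m (W ω))
            = (1 / g (W ω)) * (A ω * (Y ω - m (W ω))) := by ring
        rw [he, abs_mul, abs_mul]
        have hp : |A ω| * |Y ω - m (W ω)| ≤ 1 :=
          mul_le_one₀ (habsA ω) (abs_nonneg _) (habsYm ω)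
        have := mul_le_mul (habsinvg ω) hp (by positivity)
          (le_of_lt (one_div_pos.mpr hε))
        linarith
      have h2 : |m (W ω) - θ| ≤ 2 :=
        le_trans (abs_sub _ _) (by linarith [habsm ω, hθbd])
      have h3 := abs_add_le (A ω / g (W ω) * (Y ω - m (W ω))) (m (W ω) - θ)
      rw [add_sub_assoc]
      linarith
  rw [variance_eq_sub hmemlp]
  have hpow : (fun ω => A ω / g (W ω) * (Y ω - m (W ω)) + m (W ω) - θ) ^ 2
      = fun ω => (A ω / g (W ω) * (Y ω - m (W ω)) + m (W ω) - θ) ^ 2 := by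
    funext ω; simp
  rw [hpow, hsq, hmean]
  ring
end
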